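/- arXiv:1910.02087 — 2 statements merged into one kernel-verified Lean document; each statement's English description precedes it below -/
import Mathlib

section
/- Let V be a real-valued random variable whose distribution function F is globally Lipschitz continuous with constant M > 0, and let Φ denote the standard normal distribution function. Then for every h > 0, sup_{s∈ℝ} | E[Φ((s − V)/h)] − F(s) | ≤ M h √(2/π). -/
/-!
By Fubini, `E[Φ((s - V)/h)] = ∫ φ(w) F(s - h w) dw` is an average of `F` against the standard
normal density `φ`. Since `∫ φ = 1`, the bias is `∫ φ(w) (F(s - h w) - F(s)) dw`, whose absolute
value is at most `M h ∫ |w| φ(w) dw`, and the mean absolute deviation of the standard normal law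
is `√(2/π)`.
-/

open MeasureTheory Filter Topology

/-- The standard normal cumulative distribution function
`Φ(u) = ∫_{-∞}^u (2π)^{-1/2} exp(-w²/2) dw`. -/
noncomputable def stdGaussianCDF (u : ℝ) : ℝ :=
  ∫ w in Set.Iic u, (Real.sqrt (2 * Real.pi))⁻¹ * Real.exp (-(w ^ 2) / 2)

open Real Set ProbabilityTheory
open scoped NNReal

lemma integral_Ioi_mul_exp_neg_mul_sq {b : ℝ} (hb : 0 < b) :
    ∫ x in Ioi (0 : ℝ), x * exp (-b * x ^ 2) = (2 * b)⁻¹ := by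
  have h := integral_rpow_mul_exp_neg_mul_rpow two_pos (by norm_num : (-1 : ℝ) < 1) hb
  norm_num [Real.rpow_two, Real.rpow_neg_one, Gamma_one] at h
  simp_rw [neg_mul, h]
  ring

lemma gaussianPDFReal_zero_apply (v : ℝ≥0) (x : ℝ) :
    gaussianPDFReal 0 v x = (√(2 * π * v))⁻¹ * exp (-(2 * v : ℝ)⁻¹ * x ^ 2) := by
  rw [gaussianPDFReal, sub_zero, neg_div, neg_mul, div_eq_inv_mul]

lemma integrable_mul_gaussianPDFReal_zero (v : ℝ≥0) :
    Integrable fun x => x * gaussianPDFReal 0 v x := by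
  rcases eq_or_ne v 0 with rfl | hv
  · simp [gaussianPDFReal_zero_var]
  have hb : 0 < (2 * v : ℝ)⁻¹ := by positivity
  simpa only [gaussianPDFReal_zero_apply, mul_left_comm] using
    (integrable_mul_exp_neg_mul_sq hb).const_mul (√(2 * π * v))⁻¹

lemma integral_abs_mul_gaussianPDFReal_zero {v : ℝ≥0} (hv : v ≠ 0) :
    ∫ x, |x| * gaussianPDFReal 0 v x = √(2 * v / π) := by
  have hb : 0 < (2 * v : ℝ)⁻¹ := by positivity
  calc ∫ x, |x| * gaussianPDFReal 0 v x
      = (√(2 * π * v))⁻¹ * ∫ x, |x| * exp (-(2 * v : ℝ)⁻¹ * |x| ^ 2) := by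
        simp only [gaussianPDFReal_zero_apply, sq_abs, ← integral_const_mul, mul_left_comm]
    _ = (√(2 * π * v))⁻¹ * (2 * v) := by
        rw [integral_comp_abs (f := fun x => x * exp (-(2 * v : ℝ)⁻¹ * x ^ 2)),
          integral_Ioi_mul_exp_neg_mul_sq hb]
        field_simp
    _ = √(2 * v / π) := by
        rw [show (2 * π * v : ℝ) = π * (2 * v) by ring, sqrt_mul pi_pos.le, sqrt_div' _ pi_pos.le]
        have h2v := mul_self_sqrt (by positivity : (0 : ℝ) ≤ 2 * v)
        have : 0 < √(2 * v : ℝ) := by positivity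
        have : 0 < √π := by positivity
        field_simp
        linarith

lemma integrable_sub_mul_gaussianPDFReal (μ : ℝ) (v : ℝ≥0) :
    Integrable fun x => (x - μ) * gaussianPDFReal μ v x := by
  simpa [gaussianPDFReal_sub] using (integrable_mul_gaussianPDFReal_zero v).comp_sub_right μ

lemma integral_abs_sub_mul_gaussianPDFReal (μ : ℝ) {v : ℝ≥0} (hv : v ≠ 0) :
    ∫ x, |x - μ| * gaussianPDFReal μ v x = √(2 * v / π) := by
  simpa [gaussianPDFReal_sub] using
    (integral_sub_right_eq_self (fun x => |x| * gaussianPDFReal 0 v x) μ).trans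
      (integral_abs_mul_gaussianPDFReal_zero hv)

lemma integral_setIntegral_Iic_div_eq_integral_mul_measureReal {Ω : Type*} [MeasurableSpace Ω]
    (P : Measure Ω) [IsFiniteMeasure P] {V : Ω → ℝ} (hV : Measurable V) {g : ℝ → ℝ}
    (hg : Integrable g) {h : ℝ} (hh : 0 < h) (s : ℝ) :
    ∫ ω, (∫ w in Iic ((s - V ω) / h), g w) ∂P = ∫ w, g w * P.real {ω | V ω ≤ s - h * w} := by
  set A : Set (Ω × ℝ) := {p | V p.1 ≤ s - h * p.2}
  have hA : MeasurableSet A :=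
    measurableSet_le (hV.comp measurable_fst) (measurable_const.sub (measurable_snd.const_mul h))
  have hmem : ∀ ω w, w ≤ (s - V ω) / h ↔ (ω, w) ∈ A := fun ω w => by
    simp only [A, mem_ofPred_eq, le_div_iff₀ hh]
    constructor <;> intro <;> linarith
  calc ∫ ω, (∫ w in Iic ((s - V ω) / h), g w) ∂P
      = ∫ ω, (∫ w, A.indicator (fun p => g p.2) (ω, w)) ∂P := by
        refine integral_congr_ae (ae_of_all _ fun ω => ?_)
        simp only [← integral_indicator measurableSet_Iic, indicator, mem_Iic, hmem]
    _ = ∫ w, ∫ ω, A.indicator (fun p => g p.2) (ω, w) ∂P :=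
        integral_integral_swap (f := fun ω w => A.indicator (fun p => g p.2) (ω, w))
          ((hg.comp_snd P).indicator hA)
    _ = ∫ w, g w * P.real {ω | V ω ≤ s - h * w} := by
        refine integral_congr_ae (ae_of_all _ fun w => ?_)
        change ∫ ω, {ω | V ω ≤ s - h * w}.indicator (fun _ => g w) ω ∂P = _
        rw [integral_indicator_const _ (measurableSet_le hV measurable_const), smul_eq_mul, mul_comm]

lemma LipschitzWith.abs_integral_mul_comp_sub_sub_le {F : ℝ → ℝ} {K : ℝ≥0} (hF : LipschitzWith K F)
    {g : ℝ → ℝ} (hg : Integrable g) (hg1 : ∫ w, g w = 1) (hgm : Integrable fun w => w * g w)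
    {h : ℝ} (hh : 0 ≤ h) (s : ℝ) :
    |(∫ w, g w * F (s - h * w)) - F s| ≤ K * h * ∫ w, |w * g w| := by
  have hpt : ∀ w, ‖g w * (F (s - h * w) - F s)‖ ≤ K * h * |w * g w| := fun w => by
    have hd := hF.dist_le_mul (s - h * w) s
    rw [Real.dist_eq, Real.dist_eq, show s - h * w - s = -(h * w) by ring, abs_neg, abs_mul,
      abs_of_nonneg hh] at hd
    rw [norm_eq_abs, abs_mul, abs_mul]
    calc |g w| * |F (s - h * w) - F s| ≤ |g w| * (K * (h * |w|)) := by gcongr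
      _ = K * h * (|w| * |g w|) := by ring
  have hdom : Integrable fun w => K * h * |w * g w| := hgm.abs.const_mul _
  have hFc := hF.continuous
  have hint : Integrable fun w => g w * (F (s - h * w) - F s) :=
    hdom.mono' (hg.aestronglyMeasurable.mul (by fun_prop)) (ae_of_all _ hpt)
  have hbias : (∫ w, g w * F (s - h * w)) - F s = ∫ w, g w * (F (s - h * w) - F s) := by
    have hsplit : ∀ w, g w * F (s - h * w) = g w * (F (s - h * w) - F s) + g w * F s :=
      fun w => by ring
    simp_rw [hsplit]
    rw [integral_add hint (hg.mul_const _), integral_mul_const, hg1, one_mul, add_sub_cancel_right]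
  rw [hbias, ← norm_eq_abs, ← integral_const_mul]
  exact norm_integral_le_of_norm_le hdom (ae_of_all _ hpt)

/-- **Smoothing-bias bound (from the proof of Lemma 2).** If the distribution function
`F(s) = P(V ≤ s)` of a real random variable `V` is globally Lipschitz with constant `M > 0`,
then for every bandwidth `h > 0`,
`sup_s |E[Φ((s − V)/h)] − F(s)| ≤ M h √(2/π)`. -/
theorem smoothing_bias_bound
    {Ω : Type*} [MeasurableSpace Ω] (P : Measure Ω) [IsProbabilityMeasure P]
    (V : Ω → ℝ) (hV : Measurable V)
    (M : ℝ) (hM : 0 < M)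
    (hLip : ∀ s u : ℝ,
      |(P {ω | V ω ≤ s}).toReal - (P {ω | V ω ≤ u}).toReal| ≤ M * |s - u|)
    (h : ℝ) (hh : 0 < h) :
    ∀ s : ℝ,
      |(∫ ω, stdGaussianCDF ((s - V ω) / h) ∂P) - (P {ω | V ω ≤ s}).toReal|
        ≤ M * h * Real.sqrt (2 / Real.pi) := by
  intro s
  have hF : LipschitzWith ⟨M, hM.le⟩ fun t => P.real {ω | V ω ≤ t} :=
    LipschitzWith.of_dist_le_mul fun a b => hLip a b
  have hΦ : ∀ u, stdGaussianCDF u = ∫ w in Iic u, gaussianPDFReal 0 1 w := fun u => by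
    simp [stdGaussianCDF, gaussianPDFReal]
  calc |(∫ ω, stdGaussianCDF ((s - V ω) / h) ∂P) - (P {ω | V ω ≤ s}).toReal|
      = |(∫ w, gaussianPDFReal 0 1 w * P.real {ω | V ω ≤ s - h * w}) - P.real {ω | V ω ≤ s}| := by
        simp_rw [hΦ, integral_setIntegral_Iic_div_eq_integral_mul_measureReal P hV
          (integrable_gaussianPDFReal 0 1) hh s]
        rfl
    _ ≤ M * h * ∫ w, |w * gaussianPDFReal 0 1 w| :=
        hF.abs_integral_mul_comp_sub_sub_le (integrable_gaussianPDFReal 0 1)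
          (integral_gaussianPDFReal_eq_one 0 one_ne_zero)
          (by simpa using integrable_sub_mul_gaussianPDFReal 0 1) hh.le s
    _ = M * h * √(2 / π) := by
        have h1 := integral_abs_sub_mul_gaussianPDFReal 0 (v := 1) one_ne_zero
        simp only [sub_zero, NNReal.coe_one, mul_one] at h1
        simp_rw [abs_mul (_ : ℝ) (gaussianPDFReal _ _ _),
          abs_of_nonneg (gaussianPDFReal_nonneg _ _ _), h1]
end

section
/- Let μ₀ be a probability measure on ℝ^p such that for every θ ∈ ℝ^p with ‖θ‖ = 1, the distribution function of θᵀX under μ₀ is Lipschitz continuous with a constant M > 0 not depending on θ. Let Φ be the standard normal distribution function. Then for every h > 0, sup over all (θ, δ) with ‖θ‖ = 1 of | ∫ Φ((θᵀx − δ)/h) dμ₀(x) − μ₀{x : θᵀx > δ} | ≤ M h √(2/π). In particular, if h = h_n → 0 as n → ∞, this supremum tends to zero. -/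
/-! Writing `Φ((t - δ) / h) = P(δ + h W ≤ t)` with `W` standard normal, Fubini turns the smoothed
FPR into `E[P(θᵀX ≥ δ + h W)]`. A Lipschitz distribution function `F` is continuous, so the law
of `θᵀX` has no atoms and `P(θᵀX ≥ s) - P(θᵀX > δ) = F(δ) - F(s)`, of size at most `M h |W|` at
`s = δ + h W`. Integrating gives the bound `M h E|W| = M h √(2/π)`, uniform in `(θ, δ)`. -/

open MeasureTheory Filter Topology

open ProbabilityTheory Set Real

lemma stdGaussianCDF_eq_cdf : stdGaussianCDF = cdf (gaussianReal 0 1) := by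
  ext u
  rw [cdf_eq_real, measureReal_def, gaussianReal_apply_eq_integral 0 one_ne_zero,
    ENNReal.toReal_ofReal (setIntegral_nonneg measurableSet_Iic
      fun w _ => gaussianPDFReal_nonneg 0 1 w)]
  simp [stdGaussianCDF, gaussianPDFReal]

lemma integral_Ioi_mul_exp_neg_sq_div_two :
    ∫ r in Ioi (0 : ℝ), r * Real.exp (-(r ^ 2) / 2) = 1 := by
  have h := integral_mul_cexp_neg_mul_sq (b := (1 / 2 : ℂ)) (by norm_num)
  norm_num at h
  apply Complex.ofReal_injective
  rw [← integral_complex_ofReal]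
  refine (setIntegral_congr_fun measurableSet_Ioi fun r _ => ?_).trans h
  push_cast
  ring_nf

lemma integral_abs_gaussianReal : ∫ w, |w| ∂gaussianReal 0 1 = √(2 / π) := by
  have h_even : ∀ w : ℝ, gaussianPDFReal 0 1 w • |w|
      = (√(2 * π))⁻¹ * (|w| * Real.exp (-(|w| ^ 2) / 2)) := by
    intro w
    simp only [gaussianPDFReal, smul_eq_mul, sq_abs, NNReal.coe_one, mul_one, sub_zero]
    ring
  simp_rw [integral_gaussianReal_eq_integral_smul one_ne_zero, h_even]
  rw [integral_comp_abs (f := fun r => (√(2 * π))⁻¹ * (r * Real.exp (-(r ^ 2) / 2))),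
    integral_const_mul, integral_Ioi_mul_exp_neg_sq_div_two, Real.sqrt_mul zero_le_two,
    Real.sqrt_div zero_le_two]
  field_simp
  exact (Real.sq_sqrt zero_le_two).symm

lemma integral_measureReal_prodMk_left {α β : Type*} [MeasurableSpace α] [MeasurableSpace β]
    (μ : Measure α) (ν : Measure β) [IsFiniteMeasure μ] [IsFiniteMeasure ν]
    {s : Set (α × β)} (hs : MeasurableSet s) :
    ∫ x, ν.real (Prod.mk x ⁻¹' s) ∂μ = ∫ y, μ.real ((fun x => (x, y)) ⁻¹' s) ∂ν := by
  simp only [measureReal_def]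
  rw [integral_toReal (measurable_measure_prodMk_left hs).aemeasurable
      (ae_of_all _ fun _ => measure_lt_top _ _),
    integral_toReal (measurable_measure_prodMk_right hs).aemeasurable
      (ae_of_all _ fun _ => measure_lt_top _ _),
    ← Measure.prod_apply hs, ← Measure.prod_apply_symm hs]

section LipschitzCDF

variable {ν : Measure ℝ} [IsProbabilityMeasure ν]

lemma nullSingletonClass_of_continuous_cdf (h : Continuous (cdf ν)) : NullSingletonClass ν where
  measure_singleton a := by
    rw [← measure_cdf ν, StieltjesFunction.measure_singleton,
      h.continuousWithinAt.leftLim_eq, sub_self, ENNReal.ofReal_zero]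

lemma abs_measureReal_Ici_sub_measureReal_Ioi_le {M : ℝ}
    (hF : ∀ s u, |cdf ν s - cdf ν u| ≤ M * |s - u|) (s δ : ℝ) :
    |ν.real (Ici s) - ν.real (Ioi δ)| ≤ M * |s - δ| := by
  have : NullSingletonClass ν :=
    nullSingletonClass_of_continuous_cdf (LipschitzWith.of_dist_le' hF).continuous
  have h_Ioi : ∀ t, ν.real (Ioi t) = 1 - cdf ν t := fun t => by
    rw [← compl_Iic, probReal_compl_eq_one_sub measurableSet_Iic, cdf_eq_real]
  rw [measureReal_congr Ioi_ae_eq_Ici.symm, h_Ioi, h_Ioi, sub_sub_sub_cancel_left, abs_sub_comm]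
  exact hF s δ

lemma abs_integral_stdGaussianCDF_sub_measureReal_Ioi_le {M : ℝ}
    (hF : ∀ s u, |cdf ν s - cdf ν u| ≤ M * |s - u|) {h : ℝ} (hh : 0 < h) (δ : ℝ) :
    |∫ t, stdGaussianCDF ((t - δ) / h) ∂ν - ν.real (Ioi δ)| ≤ M * h * √(2 / π) := by
  set γ := gaussianReal 0 1
  have h_meas : MeasurableSet {q : ℝ × ℝ | δ + h * q.2 ≤ q.1} := by
    measurability
  have h_fubini : ∫ t, stdGaussianCDF ((t - δ) / h) ∂ν = ∫ w, ν.real (Ici (δ + h * w)) ∂γ := by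
    convert integral_measureReal_prodMk_left ν γ h_meas using 3 with t
    · rw [stdGaussianCDF_eq_cdf, cdf_eq_real]
      congr 1
      ext w
      simp only [mem_Iic, mem_preimage, mem_ofPred_eq, le_div_iff₀ hh]
      constructor <;> intro <;> linarith
    · rfl
  have h_int : Integrable (fun w => ν.real (Ici (δ + h * w))) γ := by
    refine .of_bound ?_ 1 (ae_of_all _ fun w => ?_)
    · exact (measurable_measure_prodMk_right h_meas).ennreal_toReal.aestronglyMeasurable
    · rw [Real.norm_eq_abs, abs_of_nonneg measureReal_nonneg]
      exact measureReal_le_one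
  calc |∫ t, stdGaussianCDF ((t - δ) / h) ∂ν - ν.real (Ioi δ)|
      = |∫ w, (ν.real (Ici (δ + h * w)) - ν.real (Ioi δ)) ∂γ| := by
        rw [h_fubini, integral_sub h_int (integrable_const _), integral_const]
        simp
    _ ≤ ∫ w, |ν.real (Ici (δ + h * w)) - ν.real (Ioi δ)| ∂γ := abs_integral_le_integral_abs
    _ ≤ ∫ w, M * h * |w| ∂γ := by
        refine integral_mono_of_nonneg (ae_of_all _ fun w => abs_nonneg _)
          (((memLp_id_gaussianReal 1).integrable le_rfl).abs.const_mul _) (ae_of_all _ fun w => ?_)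
        have := abs_measureReal_Ici_sub_measureReal_Ioi_le hF (δ + h * w) δ
        rwa [add_sub_cancel_left, abs_mul, abs_of_pos hh, ← mul_assoc] at this
    _ = M * h * √(2 / π) := by rw [integral_const_mul, integral_abs_gaussianReal]

end LipschitzCDF

lemma abs_integral_stdGaussianCDF_comp_sub_measureReal_lt_le {α : Type*} [MeasurableSpace α]
    (μ : Measure α) [IsProbabilityMeasure μ] {T : α → ℝ} (hT : Measurable T) {M : ℝ}
    (hF : ∀ s u, |μ.real {x | T x ≤ s} - μ.real {x | T x ≤ u}| ≤ M * |s - u|)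
    {h : ℝ} (hh : 0 < h) (δ : ℝ) :
    |∫ x, stdGaussianCDF ((T x - δ) / h) ∂μ - μ.real {x | δ < T x}| ≤ M * h * √(2 / π) := by
  have : IsProbabilityMeasure (μ.map T) := Measure.isProbabilityMeasure_map hT.aemeasurable
  have h_cdf : ∀ s, cdf (μ.map T) s = μ.real {x | T x ≤ s} := fun s => by
    rw [cdf_eq_real, map_measureReal_apply hT measurableSet_Iic]
    rfl
  have h_meas : Measurable fun t => stdGaussianCDF ((t - δ) / h) := by
    rw [stdGaussianCDF_eq_cdf]
    exact (monotone_cdf _).measurable.comp (by fun_prop)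
  have := abs_integral_stdGaussianCDF_sub_measureReal_Ioi_le (ν := μ.map T)
    (fun s u => by simpa only [h_cdf] using hF s u) hh δ
  rwa [integral_map hT.aemeasurable h_meas.aestronglyMeasurable,
    map_measureReal_apply hT measurableSet_Ioi] at this

lemma tendsto_sSup_image_of_le {ι : Type*} (S : Set ι) (f : ℕ → ι → ℝ) (b : ℕ → ℝ)
    (hf_nonneg : ∀ n, ∀ i ∈ S, 0 ≤ f n i) (hb_nonneg : ∀ n, 0 ≤ b n)
    (hf_le : ∀ n, ∀ i ∈ S, f n i ≤ b n) (hb : Tendsto b atTop (𝓝 0)) :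
    Tendsto (fun n => sSup (f n '' S)) atTop (𝓝 0) := by
  refine tendsto_of_tendsto_of_tendsto_of_le_of_le tendsto_const_nhds hb
    (fun n => Real.sSup_nonneg ?_) (fun n => Real.sSup_le ?_ (hb_nonneg n))
  · rintro _ ⟨i, hi, rfl⟩
    exact hf_nonneg n i hi
  · rintro _ ⟨i, hi, rfl⟩
    exact hf_le n i hi

/-- **Uniform smoothing-bias bound for the FPR (from the proof of Lemma 2).**
If for every unit vector `θ` the distribution function of `θᵀX` under `μ₀` is Lipschitz with a
constant `M > 0` not depending on `θ`, then for every `h > 0` and every `(θ, δ)` with `‖θ‖ = 1`,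
`|∫ Φ((θᵀx − δ)/h) dμ₀(x) − μ₀{x : θᵀx > δ}| ≤ M h √(2/π)`; in particular, if `h = hₙ → 0`,
the supremum of the left-hand side over `{(θ, δ) : ‖θ‖ = 1}` tends to zero. -/
theorem fpr_smoothing_bias_uniform
    {p : ℕ} (μ0 : Measure (EuclideanSpace ℝ (Fin p))) [IsProbabilityMeasure μ0]
    (M : ℝ) (hM : 0 < M)
    (hLip : ∀ θ : EuclideanSpace ℝ (Fin p), ‖θ‖ = 1 → ∀ s u : ℝ,
      |(μ0 {x | ∑ i, θ i * x i ≤ s}).toReal - (μ0 {x | ∑ i, θ i * x i ≤ u}).toReal|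
        ≤ M * |s - u|) :
    (∀ h : ℝ, 0 < h → ∀ (θ : EuclideanSpace ℝ (Fin p)) (δ : ℝ), ‖θ‖ = 1 →
        |(∫ x, stdGaussianCDF ((∑ i, θ i * x i - δ) / h) ∂μ0)
            - (μ0 {x | δ < ∑ i, θ i * x i}).toReal|
          ≤ M * h * Real.sqrt (2 / Real.pi)) ∧
    (∀ hseq : ℕ → ℝ, (∀ n, 0 < hseq n) → Tendsto hseq atTop (𝓝 0) →
        Tendsto (fun n => sSup ((fun q : EuclideanSpace ℝ (Fin p) × ℝ =>
            |(∫ x, stdGaussianCDF ((∑ i, q.1 i * x i - q.2) / hseq n) ∂μ0)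
              - (μ0 {x | q.2 < ∑ i, q.1 i * x i}).toReal|) '' {q | ‖q.1‖ = 1}))
          atTop (𝓝 0)) := by
  have bias_le : ∀ h : ℝ, 0 < h → ∀ (θ : EuclideanSpace ℝ (Fin p)) (δ : ℝ), ‖θ‖ = 1 →
      |(∫ x, stdGaussianCDF ((∑ i, θ i * x i - δ) / h) ∂μ0)
          - (μ0 {x | δ < ∑ i, θ i * x i}).toReal| ≤ M * h * √(2 / π) :=
    fun h hh θ δ hθ => abs_integral_stdGaussianCDF_comp_sub_measureReal_lt_le μ0
      (by fun_prop) (hLip θ hθ) hh δ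
  refine ⟨bias_le, fun hseq hpos htend => ?_⟩
  refine tendsto_sSup_image_of_le _ _ _ (fun _ _ _ => abs_nonneg _)
    (fun n => mul_nonneg (mul_nonneg hM.le (hpos n).le) (sqrt_nonneg _))
    (fun n q hq => bias_le _ (hpos n) q.1 q.2 hq) ?_
  simpa using (htend.const_mul M).mul_const √(2 / π)
end
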